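/- For every x ∈ M^n and every y ∈ M^n ∖ {x}, ∑_{j=1}^n ∂̄_{y_j} K_j(y − x) = 0 and ∑_{j=1}^n K_j(y − x) ∂̄_{y_j} = 0, where ∂̄_{y_j} applied on the left means ∑_{s=0}^m v_s ∂/∂y_{j,s} acting by left multiplication and applied on the right means ∑_{s=0}^m (∂/∂y_{j,s}) acting with right multiplication by v_s. -/

import Mathlib

/-!
At `w = y - x ≠ 0`, with `N = (m + 1) n` and `κ = (σ_N |w|^N)⁻¹`, the product rule gives
`∂K_j/∂w_{j,s} = κ (v_sᶜ - N w_{j,s} |w|⁻² w_jᶜ)`. Multiplying by `v_s` (on either side) and summing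
over `s`, the identities `v_s v_sᶜ = 1` and `q qᶜ = qᶜ q = |q|²` for `q ∈ M` leave the real multiple
`κ ((m + 1) - N |w_j|² / |w|²)` of `1`, and these cancel in the sum over `j` because
`∑_j |w_j|² = |w|²`.
-/

open MeasureTheory

noncomputable section

/-- A real alternative `*`-algebra of finite dimension `> 1`, with a fixed
hypercomplex basis `v 0 = 1, v 1, …, v m` spanning the hypercomplex subspace `M`.
Multiplication is `ℝ`-bilinear (bundled as a linear map). -/
structure HCAlg (𝔸 : Type) [NormedAddCommGroup 𝔸] [NormedSpace ℝ 𝔸] (m : ℕ) : Type where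
  mul : 𝔸 →ₗ[ℝ] 𝔸 →ₗ[ℝ] 𝔸
  one : 𝔸
  conj : 𝔸 →ₗ[ℝ] 𝔸
  findim : FiniteDimensional ℝ 𝔸
  dim_gt_one : 1 < Module.finrank ℝ 𝔸
  one_mul' : ∀ a, mul one a = a
  mul_one' : ∀ a, mul a one = a
  alt_left : ∀ a b, mul a (mul a b) = mul (mul a a) b
  alt_right : ∀ a b, mul (mul b a) a = mul b (mul a a)
  conj_invol : ∀ a, conj (conj a) = a
  conj_mul' : ∀ a b, conj (mul a b) = mul (conj b) (conj a)
  conj_one : conj one = one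
  hm : 1 ≤ m
  v : Fin (m + 1) → 𝔸
  v_indep : LinearIndependent ℝ v
  v_zero : v 0 = one
  v_trace : ∀ s, s ≠ 0 → v s + conj (v s) = 0
  v_norm : ∀ s, s ≠ 0 → mul (v s) (conj (v s)) = one
  v_anticomm : ∀ s t, s ≠ 0 → t ≠ 0 → s ≠ t → mul (v s) (v t) = -(mul (v t) (v s))

variable {𝔸 : Type} [NormedAddCommGroup 𝔸] [NormedSpace ℝ 𝔸] {m n : ℕ}

/-- `M^n`, identified with `ℝ^{(m+1)n}` via the coordinates `x j s`. -/
abbrev Mn (n m : ℕ) := Fin n → Fin (m + 1) → ℝ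

/-- Euclidean norm of a point of `M` (in coordinates). -/
def enormM (c : Fin (m + 1) → ℝ) : ℝ := Real.sqrt (∑ s, c s ^ 2)

/-- Euclidean norm of a point of `M^n` (in coordinates). -/
def enormMn (x : Mn n m) : ℝ := Real.sqrt (∑ j, ∑ s, x j s ^ 2)

/-- Partial derivative `∂f/∂x_{j,s}` for functions on `M^n`. -/
def pd {E : Type} [NormedAddCommGroup E] [NormedSpace ℝ E]
    (f : Mn n m → E) (j : Fin n) (s : Fin (m + 1)) (x : Mn n m) : E :=
  fderiv ℝ f x (Pi.single j (Pi.single s 1))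

/-- Partial derivative `∂f/∂x_s` for functions on `M`. -/
def pd1 {E : Type} [NormedAddCommGroup E] [NormedSpace ℝ E]
    (f : (Fin (m + 1) → ℝ) → E) (s : Fin (m + 1)) (x : Fin (m + 1) → ℝ) : E :=
  fderiv ℝ f x (Pi.single s 1)

/-- The Dirac (Cauchy–Riemann) operator `∂̄_j = ∑_s v_s ∂/∂x_{j,s}`. -/
def dbar (H : HCAlg 𝔸 m) (f : Mn n m → 𝔸) (j : Fin n) (x : Mn n m) : 𝔸 :=
  ∑ s, H.mul (H.v s) (pd f j s x)

/-- The conjugated Dirac operator `∂_j = ∑_s v_s^c ∂/∂x_{j,s}`. -/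
def dconj (H : HCAlg 𝔸 m) (f : Mn n m → 𝔸) (j : Fin n) (x : Mn n m) : 𝔸 :=
  ∑ s, H.mul (H.conj (H.v s)) (pd f j s x)

/-- The Laplacian `Δ_j = ∑_s ∂²/∂x_{j,s}²` in the `j`-th block of variables. -/
def lap {E : Type} [NormedAddCommGroup E] [NormedSpace ℝ E]
    (f : Mn n m → E) (j : Fin n) (x : Mn n m) : E :=
  ∑ s, pd (pd f j s) j s x

/-- Surface area of the unit `(N-1)`-sphere in `ℝ^N`: `σ_N = 2 π^{N/2} / Γ(N/2)`. -/
def usigma (N : ℕ) : ℝ := 2 * Real.pi ^ ((N : ℝ) / 2) / Real.Gamma ((N : ℝ) / 2)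

/-- Embedding of coordinates into the hypercomplex subspace `M ⊆ 𝔸`. -/
def embM (H : HCAlg 𝔸 m) (c : Fin (m + 1) → ℝ) : 𝔸 := ∑ s, c s • H.v s

/-- The Cauchy kernel `E(x) = σ_{m+1}⁻¹ x^c / |x|^{m+1}` on `M`. -/
def CauchyE (H : HCAlg 𝔸 m) (c : Fin (m + 1) → ℝ) : 𝔸 :=
  (usigma (m + 1) * enormM c ^ (m + 1))⁻¹ • H.conj (embM H c)

/-- The Bochner–Martinelli kernel components `K_j(x) = σ_N⁻¹ x_j^c / |x|^N`, `N = (m+1)n`. -/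
def Kker (H : HCAlg 𝔸 m) (n : ℕ) (j : Fin n) (x : Mn n m) : 𝔸 :=
  (usigma ((m + 1) * n) * enormMn x ^ ((m + 1) * n))⁻¹ • H.conj (embM H (x j))

/-- `Tsol g (x) = −∫_M E(y₁ − x₁) (g(y₁, x⁰)) dV(y₁)`. -/
def Tsol (H : HCAlg 𝔸 m) (hn : 0 < n) (g : Mn n m → 𝔸) (x : Mn n m) : 𝔸 :=
  - ∫ y1 : Fin (m + 1) → ℝ,
      H.mul (CauchyE H (y1 - x ⟨0, hn⟩)) (g (Function.update x ⟨0, hn⟩ y1))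

/-- `Fint g (x) = ∫_M E(y₁) (g(y₁ + x₁, x⁰)) dV(y₁)`. -/
def Fint (H : HCAlg 𝔸 m) (hn : 0 < n) (g : Mn n m → 𝔸) (x : Mn n m) : 𝔸 :=
  ∫ y1 : Fin (m + 1) → ℝ,
      H.mul (CauchyE H y1) (g (Function.update x ⟨0, hn⟩ (y1 + x ⟨0, hn⟩)))

lemma sum_sum_mul_smul_eq_of_add_swap {ι E : Type*} [Fintype ι] [DecidableEq ι] [AddCommGroup E]
    [Module ℝ E] (a : ι → ℝ) (f : ι → ι → E) (e : E)
    (hf : ∀ s t, f s t + f t s = if s = t then (2 : ℝ) • e else 0) :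
    ∑ s, ∑ t, (a s * a t) • f s t = (∑ s, a s ^ 2) • e := by
  apply smul_right_injective E (two_ne_zero' ℝ)
  calc (2 : ℝ) • ∑ s, ∑ t, (a s * a t) • f s t
      = ∑ s, ∑ t, (a s * a t) • (f s t + f t s) := by
        simp only [two_smul, smul_add, Finset.sum_add_distrib]
        rw [Finset.sum_comm (f := fun s t => (a s * a t) • f t s)]
        simp only [mul_comm]
    _ = (2 : ℝ) • (∑ s, a s ^ 2) • e := by
        simp [hf, smul_smul, sq, ← Finset.sum_smul, Finset.mul_sum, mul_comm _ (2 : ℝ)]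

namespace HCAlg

variable (H : HCAlg 𝔸 m)

lemma conj_v {s : Fin (m + 1)} (hs : s ≠ 0) : H.conj (H.v s) = -H.v s :=
  eq_neg_of_add_eq_zero_right (H.v_trace s hs)

lemma mul_v_self {s : Fin (m + 1)} (hs : s ≠ 0) : H.mul (H.v s) (H.v s) = -H.one := by
  rw [← neg_eq_iff_eq_neg, ← map_neg, ← H.conj_v hs]
  exact H.v_norm s hs

lemma mul_v_conj_v_add_swap (s t : Fin (m + 1)) :
    H.mul (H.v s) (H.conj (H.v t)) + H.mul (H.v t) (H.conj (H.v s)) =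
      if s = t then (2 : ℝ) • H.one else 0 := by
  rcases eq_or_ne s t with rfl | hst
  · rcases eq_or_ne s 0 with rfl | hs
    · simp [H.v_zero, H.conj_one, H.one_mul', two_smul]
    · simp [H.conj_v hs, H.mul_v_self hs, two_smul]
  rw [if_neg hst]
  rcases eq_or_ne s 0 with rfl | hs
  · simpa [H.v_zero, H.conj_one, H.one_mul', H.mul_one', add_comm] using H.v_trace t hst.symm
  rcases eq_or_ne t 0 with rfl | ht
  · simpa [H.v_zero, H.conj_one, H.one_mul', H.mul_one'] using H.v_trace s hs
  simp [H.conj_v hs, H.conj_v ht, H.v_anticomm s t hs ht hst]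

lemma embM_eq_linearCombination : embM H = Fintype.linearCombination ℝ H.v := rfl

lemma embM_single (s : Fin (m + 1)) : embM H (Pi.single s 1) = H.v s := by
  simp [embM_eq_linearCombination]

lemma mul_embM_conj_embM (a : Fin (m + 1) → ℝ) :
    H.mul (embM H a) (H.conj (embM H a)) = (∑ s, a s ^ 2) • H.one := by
  have hexp : H.mul (embM H a) (H.conj (embM H a)) =
      ∑ s, ∑ t, (a s * a t) • H.mul (H.v s) (H.conj (H.v t)) := by
    simp only [embM, map_sum, map_smul, LinearMap.sum_apply, LinearMap.smul_apply,
      Finset.smul_sum, smul_smul]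
    rw [Finset.sum_comm]
    simp only [mul_comm]
  rw [hexp]
  exact sum_sum_mul_smul_eq_of_add_swap a _ H.one H.mul_v_conj_v_add_swap

lemma conj_embM (a : Fin (m + 1) → ℝ) :
    H.conj (embM H a) = (2 * a 0) • H.one - embM H a := by
  have hv : ∀ i : Fin m, H.conj (H.v i.succ) = -H.v i.succ := fun i => H.conj_v i.succ_ne_zero
  simp only [embM, map_sum, map_smul]
  simp only [Fin.sum_univ_succ, hv, H.v_zero, H.conj_one, smul_neg, Finset.sum_neg_distrib,
    mul_smul, two_smul]
  abel

lemma mul_conj_embM_embM (a : Fin (m + 1) → ℝ) :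
    H.mul (H.conj (embM H a)) (embM H a) = (∑ s, a s ^ 2) • H.one := by
  rw [← H.mul_embM_conj_embM, H.conj_embM]
  simp [H.one_mul', H.mul_one']

end HCAlg

section PartialDerivatives

variable {E : Type} [NormedAddCommGroup E] [NormedSpace ℝ E] (j : Fin n) (s : Fin (m + 1))

lemma pd_comp_sub (f : Mn n m → E) (x y : Mn n m) :
    pd (fun z => f (z - x)) j s y = pd f j s (y - x) := by
  rw [pd, pd, fderiv_comp_sub]

lemma pd_linearMap (f : Mn n m →ₗ[ℝ] E) (w : Mn n m) :
    pd f j s w = f (Pi.single j (Pi.single s 1)) := by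
  rw [pd, ← LinearMap.coe_toContinuousLinearMap' f, ContinuousLinearMap.fderiv]

lemma pd_fun_smul {φ : Mn n m → ℝ} {ψ : Mn n m → E} {w : Mn n m}
    (hφ : DifferentiableAt ℝ φ w) (hψ : DifferentiableAt ℝ ψ w) :
    pd (fun z => φ z • ψ z) j s w = φ w • pd ψ j s w + pd φ j s w • ψ w := by
  simp [pd, fderiv_fun_smul hφ hψ]

lemma pd_comp_of_hasDerivAt {g : ℝ → ℝ} {g' : ℝ} {f : Mn n m → ℝ} {w : Mn n m}
    (hg : HasDerivAt g g' (f w)) (hf : DifferentiableAt ℝ f w) :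
    pd (fun z => g (f z)) j s w = g' * pd f j s w := by
  have h := (hg.comp_hasFDerivAt w hf.hasFDerivAt).fderiv
  simp only [Function.comp_def] at h
  simp [pd, h]

end PartialDerivatives

lemma enormMn_sq (w : Mn n m) : enormMn w ^ 2 = ∑ j, ∑ s, w j s ^ 2 :=
  Real.sq_sqrt (by positivity)

lemma differentiable_enormMn_sq : Differentiable ℝ (fun w : Mn n m => enormMn w ^ 2) := by
  simp only [enormMn_sq]
  fun_prop

lemma pd_enormMn_sq (j : Fin n) (s : Fin (m + 1)) (w : Mn n m) :
    pd (fun z => enormMn z ^ 2) j s w = 2 * w j s := by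
  let coord (j' : Fin n) (t : Fin (m + 1)) : Mn n m →L[ℝ] ℝ :=
    ContinuousLinearMap.proj t ∘L ContinuousLinearMap.proj j'
  have hterm : ∀ j' t, HasFDerivAt (fun z : Mn n m => coord j' t z ^ 2)
      ((2 * w j' t) • coord j' t) w := fun j' t => by
    simpa [Function.comp_def] using
      (hasDerivAt_pow 2 (w j' t)).comp_hasFDerivAt w (coord j' t).hasFDerivAt
  have hsum : HasFDerivAt (fun z : Mn n m => enormMn z ^ 2)
      (∑ j', ∑ t, (2 * w j' t) • coord j' t) w := by
    simp only [enormMn_sq]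
    exact HasFDerivAt.fun_sum fun j' _ => HasFDerivAt.fun_sum fun t _ => hterm j' t
  rw [pd, hsum.fderiv]
  simp [coord, Pi.single_apply, ite_apply]

lemma enormMn_ne_zero {w : Mn n m} (hw : w ≠ 0) : enormMn w ≠ 0 := by
  contrapose! hw
  have h := enormMn_sq w
  rw [hw, zero_pow two_ne_zero, eq_comm,
    Finset.sum_eq_zero_iff_of_nonneg fun _ _ => by positivity] at h
  ext j s
  simpa using (Finset.sum_eq_zero_iff_of_nonneg fun _ _ => sq_nonneg _).1
    (h j (Finset.mem_univ _)) s (Finset.mem_univ _)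

lemma inv_mul_enormMn_pow_eq_rpow (c : ℝ) (N : ℕ) (w : Mn n m) :
    (c * enormMn w ^ N)⁻¹ = c⁻¹ * (enormMn w ^ 2) ^ (-(N : ℝ) / 2) := by
  have hr : 0 ≤ enormMn w := Real.sqrt_nonneg _
  rw [mul_inv, ← Real.rpow_natCast (enormMn w) 2, ← Real.rpow_mul hr, Nat.cast_ofNat,
    show (2 : ℝ) * (-(N : ℝ) / 2) = -N by ring, Real.rpow_neg hr, Real.rpow_natCast]

lemma pd_Kker (H : HCAlg 𝔸 m) {w : Mn n m} (hw : w ≠ 0) (j : Fin n) (s : Fin (m + 1)) :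
    pd (Kker H n j) j s w = (usigma ((m + 1) * n) * enormMn w ^ ((m + 1) * n))⁻¹ •
      (H.conj (H.v s) - (((m + 1) * n : ℕ) * w j s / enormMn w ^ 2) • H.conj (embM H (w j))) := by
  set N := (m + 1) * n
  let ψ : Mn n m →ₗ[ℝ] 𝔸 := H.conj ∘ₗ Fintype.linearCombination ℝ H.v ∘ₗ LinearMap.proj j
  have hK : Kker H n j = fun z => ((usigma N)⁻¹ * (enormMn z ^ 2) ^ (-(N : ℝ) / 2)) • ψ z := by
    funext z
    rw [Kker, inv_mul_enormMn_pow_eq_rpow]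
    simp [ψ, embM, Fintype.linearCombination_apply, N]
  have hS : enormMn w ^ 2 ≠ 0 := pow_ne_zero 2 (enormMn_ne_zero hw)
  have hg := (Real.hasDerivAt_rpow_const (p := -(N : ℝ) / 2) (Or.inl hS)).const_mul (usigma N)⁻¹
  have hφ : DifferentiableAt ℝ (fun z => (usigma N)⁻¹ * (enormMn z ^ 2) ^ (-(N : ℝ) / 2)) w :=
    hg.differentiableAt.comp (f := fun z => enormMn z ^ 2) w (differentiable_enormMn_sq w)
  have hψ : DifferentiableAt ℝ ψ w := by simpa using ψ.toContinuousLinearMap.differentiableAt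
  rw [hK, pd_fun_smul _ _ hφ hψ, pd_linearMap,
    pd_comp_of_hasDerivAt _ _ hg (differentiable_enormMn_sq w), pd_enormMn_sq,
    Real.rpow_sub_one hS, inv_mul_enormMn_pow_eq_rpow]
  simp [ψ, H.embM_single, ← H.embM_eq_linearCombination]
  module

lemma sum_sum_pd_Kker_eq_zero (H : HCAlg 𝔸 m) (B : 𝔸 →ₗ[ℝ] 𝔸 →ₗ[ℝ] 𝔸)
    (hB : ∀ a, B (embM H a) (H.conj (embM H a)) = (∑ s, a s ^ 2) • H.one)
    {w : Mn n m} (hw : w ≠ 0) :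
    ∑ j, ∑ s, B (H.v s) (pd (Kker H n j) j s w) = 0 := by
  have hv : ∀ s, B (H.v s) (H.conj (H.v s)) = H.one := fun s => by
    simpa [H.embM_single, Pi.single_apply] using hB (Pi.single s 1)
  have hS : enormMn w ^ 2 ≠ 0 := pow_ne_zero 2 (enormMn_ne_zero hw)
  set N := (m + 1) * n
  set κ := (usigma N * enormMn w ^ N)⁻¹
  have hj : ∀ j, ∑ s, B (H.v s) (pd (Kker H n j) j s w) =
      (κ * ((m + 1 : ℕ) - N / enormMn w ^ 2 * ∑ s, w j s ^ 2)) • H.one := by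
    intro j
    have hlin : ∑ s, w j s • B (H.v s) = B (embM H (w j)) := by simp [embM, map_sum]
    calc ∑ s, B (H.v s) (pd (Kker H n j) j s w)
        = κ • (∑ s, B (H.v s) (H.conj (H.v s)) -
            ((N : ℝ) / enormMn w ^ 2) • (∑ s, w j s • B (H.v s)) (H.conj (embM H (w j)))) := by
          simp only [pd_Kker H hw, map_smul, map_sub, LinearMap.sum_apply, LinearMap.smul_apply,
            Finset.smul_sum, ← Finset.sum_sub_distrib, smul_smul]
          congr 1; ext s; congr 3; ring
      _ = _ := by
          rw [hlin, hB, Finset.sum_congr rfl fun s _ => hv s, Finset.sum_const, Finset.card_univ,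
            Fintype.card_fin]
          module
  have hcoeff : ∑ j : Fin n, ((m + 1 : ℕ) - N / enormMn w ^ 2 * ∑ s, w j s ^ 2 : ℝ) = 0 := by
    rw [Finset.sum_sub_distrib, ← Finset.mul_sum, ← enormMn_sq, div_mul_cancel₀ _ hS]
    push_cast [N]
    simp only [Finset.sum_const, Finset.card_univ, Fintype.card_fin, nsmul_eq_mul]
    ring
  rw [Finset.sum_congr rfl fun j _ => hj j, ← Finset.sum_smul, ← Finset.mul_sum, hcoeff,
    mul_zero, zero_smul]

/-- (Lemma 3.3): for every `x ∈ M^n` and `y ≠ x`,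
`∑_j ∂̄_{y_j} K_j(y − x) = 0` (left application) and
`∑_j K_j(y − x) ∂̄_{y_j} = 0` (right application). -/
theorem sum_dbar_Kj_eq_zero (H : HCAlg 𝔸 m)
    (x y : Mn n m) (hyx : y ≠ x) :
    (∑ j, dbar H (fun z => Kker H n j (z - x)) j y) = 0 ∧
    (∑ j, ∑ s, H.mul (pd (fun z => Kker H n j (z - x)) j s y) (H.v s)) = 0 := by
  have hw : y - x ≠ 0 := sub_ne_zero.mpr hyx
  simp only [dbar, pd_comp_sub]
  refine ⟨sum_sum_pd_Kker_eq_zero H H.mul H.mul_embM_conj_embM hw, ?_⟩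
  simpa only [LinearMap.flip_apply] using
    sum_sum_pd_Kker_eq_zero H H.mul.flip H.mul_conj_embM_embM hw

end
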